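/- arXiv:1005.2816 — 5 statements merged into one kernel-verified Lean document; each statement's English description precedes it below -/
import Mathlib

section
/- For every n ≥ 1, the minimum order of an n-universal tournament is at least 2^((n-1)/2). -/
/-- An oriented graph: a loopless digraph with no opposite arcs. -/
structure OrientedGraph (V : Type*) where
  Adj : V → V → Prop
  asymm : ∀ u v, Adj u v → ¬ Adj v u

namespace OrientedGraph

theorem irrefl {V : Type*} (G : OrientedGraph V) (u : V) : ¬ G.Adj u u :=
  fun h => G.asymm u u h h

/-- A homomorphism of oriented graphs maps arcs to arcs. -/
def IsHom {V W : Type*} (G : OrientedGraph V) (H : OrientedGraph W) (f : V → W) : Prop :=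
  ∀ u v, G.Adj u v → H.Adj (f u) (f v)

/-- The oriented chromatic number of an oriented graph: the minimum order of an
oriented graph to which it admits a homomorphism. -/
noncomputable def ochrom {V : Type*} (G : OrientedGraph V) : ℕ :=
  sInf {n | ∃ T : OrientedGraph (Fin n), ∃ f : V → Fin n, G.IsHom T f}

end OrientedGraph

/-- `o` is an orientation of the simple graph `G`. -/
def IsOrientation {V : Type*} (G : SimpleGraph V) (o : OrientedGraph V) : Prop :=
  ∀ u v, (o.Adj u v ∨ o.Adj v u) ↔ G.Adj u v

/-- The oriented chromatic number of an undirected graph: the greatest oriented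
chromatic number of its orientations. -/
noncomputable def uochrom {V : Type*} (G : SimpleGraph V) : ℕ :=
  sSup {k | ∃ o : OrientedGraph V, IsOrientation G o ∧ o.ochrom = k}

/-- The upper oriented chromatic number of an undirected graph: the minimum order
of an oriented graph to which every orientation admits a homomorphism. -/
noncomputable def upperOchrom {V : Type*} (G : SimpleGraph V) : ℕ :=
  sInf {n | ∃ U : OrientedGraph (Fin n), ∀ o : OrientedGraph V,
    IsOrientation G o → ∃ f : V → Fin n, o.IsHom U f}

/-- The square of a simple graph: edges between vertices at distance 1 or 2. -/
def square {V : Type*} (G : SimpleGraph V) : SimpleGraph V where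
  Adj u v := u ≠ v ∧ (G.Adj u v ∨ ∃ w, G.Adj u w ∧ G.Adj w v)
  symm := by
    constructor
    rintro u v ⟨hne, h | ⟨w, h1, h2⟩⟩
    · exact ⟨hne.symm, Or.inl h.symm⟩
    · exact ⟨hne.symm, Or.inr ⟨w, h2.symm, h1.symm⟩⟩
  loopless := by constructor; rintro u ⟨hne, -⟩; exact hne rfl

/-- Lexicographic product of oriented graphs. -/
def olex {V W : Type*} (G : OrientedGraph V) (H : OrientedGraph W) :
    OrientedGraph (V × W) where
  Adj p q := G.Adj p.1 q.1 ∨ (p.1 = q.1 ∧ H.Adj p.2 q.2)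
  asymm := by
    rintro ⟨u, v⟩ ⟨u', v'⟩ (h | ⟨he, h⟩) (h' | ⟨he', h'⟩)
    · exact G.asymm _ _ h h'
    · subst he'; exact G.irrefl _ h
    · subst he; exact G.irrefl _ h'
    · exact H.asymm _ _ h h'

/-- Strong product of oriented graphs. -/
def ostrong {V W : Type*} (G : OrientedGraph V) (H : OrientedGraph W) :
    OrientedGraph (V × W) where
  Adj p q := (p.1 = q.1 ∧ H.Adj p.2 q.2) ∨ (p.2 = q.2 ∧ G.Adj p.1 q.1) ∨
    (G.Adj p.1 q.1 ∧ H.Adj p.2 q.2)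
  asymm := by
    rintro ⟨u, v⟩ ⟨u', v'⟩ (⟨e, h⟩ | ⟨e, h⟩ | ⟨h1, h2⟩) (⟨e', h'⟩ | ⟨e', h'⟩ | ⟨h1', h2'⟩)
    · exact H.asymm _ _ h h'
    · subst e; exact G.irrefl _ h'
    · exact H.asymm _ _ h h2'
    · subst e'; exact G.irrefl _ h
    · exact G.asymm _ _ h h'
    · exact G.asymm _ _ h h1'
    · subst e'; exact G.irrefl _ h1
    · exact G.asymm _ _ h1 h'
    · exact G.asymm _ _ h1 h1'

/-- Cartesian product of oriented graphs. -/
def ocart {V W : Type*} (G : OrientedGraph V) (H : OrientedGraph W) :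
    OrientedGraph (V × W) where
  Adj p q := (p.1 = q.1 ∧ H.Adj p.2 q.2) ∨ (p.2 = q.2 ∧ G.Adj p.1 q.1)
  asymm := by
    rintro ⟨u, v⟩ ⟨u', v'⟩ (⟨e, h⟩ | ⟨e, h⟩) (⟨e', h'⟩ | ⟨e', h'⟩)
    · exact H.asymm _ _ h h'
    · subst e; exact G.irrefl _ h'
    · subst e'; exact G.irrefl _ h
    · exact G.asymm _ _ h h'

/-- Direct product of oriented graphs. -/
def odirect {V W : Type*} (G : OrientedGraph V) (H : OrientedGraph W) :
    OrientedGraph (V × W) where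
  Adj p q := G.Adj p.1 q.1 ∧ H.Adj p.2 q.2
  asymm := by rintro ⟨u, v⟩ ⟨u', v'⟩ ⟨h1, h2⟩ ⟨h1', h2'⟩; exact G.asymm _ _ h1 h1'

/-- Lexicographic product of simple graphs. -/
def slex {V W : Type*} (G : SimpleGraph V) (H : SimpleGraph W) :
    SimpleGraph (V × W) where
  Adj p q := G.Adj p.1 q.1 ∨ (p.1 = q.1 ∧ H.Adj p.2 q.2)
  symm := by
    constructor
    rintro ⟨u, v⟩ ⟨u', v'⟩ (h | ⟨he, h⟩)
    · exact Or.inl h.symm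
    · exact Or.inr ⟨he.symm, h.symm⟩
  loopless := by constructor; rintro ⟨u, v⟩ (h | ⟨-, h⟩); exacts [G.irrefl h, H.irrefl h]

/-- Strong product of simple graphs. -/
def sstrong {V W : Type*} (G : SimpleGraph V) (H : SimpleGraph W) :
    SimpleGraph (V × W) where
  Adj p q := (p.1 = q.1 ∧ H.Adj p.2 q.2) ∨ (p.2 = q.2 ∧ G.Adj p.1 q.1) ∨
    (G.Adj p.1 q.1 ∧ H.Adj p.2 q.2)
  symm := by
    constructor
    rintro ⟨u, v⟩ ⟨u', v'⟩ (⟨e, h⟩ | ⟨e, h⟩ | ⟨h1, h2⟩)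
    · exact Or.inl ⟨e.symm, h.symm⟩
    · exact Or.inr (Or.inl ⟨e.symm, h.symm⟩)
    · exact Or.inr (Or.inr ⟨h1.symm, h2.symm⟩)
  loopless := by
    constructor
    rintro ⟨u, v⟩ (⟨-, h⟩ | ⟨-, h⟩ | ⟨h, -⟩) <;> first | exact H.irrefl h | exact G.irrefl h

/-- A tournament: an orientation of a complete graph. -/
def IsTournament {V : Type*} (T : OrientedGraph V) : Prop :=
  ∀ u v : V, u ≠ v → T.Adj u v ∨ T.Adj v u

/-- `T` contains every tournament on `n` vertices as a subtournament. -/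
def IsUniversal {V : Type*} (n : ℕ) (T : OrientedGraph V) : Prop :=
  IsTournament T ∧ ∀ S : OrientedGraph (Fin n), IsTournament S →
    ∃ f : Fin n → V, Function.Injective f ∧ ∀ u v, S.Adj u v → T.Adj (f u) (f v)

/-- The directed path on `k` vertices. -/
def dirPath (k : ℕ) : OrientedGraph (Fin k) where
  Adj i j := (i : ℕ) + 1 = (j : ℕ)
  asymm := by intro u v h h'; omega

/-- The directed 3-cycle. -/
def dirC3 : OrientedGraph (ZMod 3) where
  Adj i j := j = i + 1
  asymm := by decide

/-- The circulant tournament T(7;1,2,3). -/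
def circT7 : OrientedGraph (ZMod 7) where
  Adj i j := j - i = 1 ∨ j - i = 2 ∨ j - i = 3
  asymm := by decide

open Classical in
noncomputable def TDecode (n : ℕ) (b : ∀ i : Fin n, Fin i → Bool) : OrientedGraph (Fin n) where
  Adj u v := (∃ h : (v : ℕ) < (u : ℕ), b u ⟨v, h⟩ = true) ∨
    (∃ h : (u : ℕ) < (v : ℕ), b v ⟨u, h⟩ = false)
  asymm := by
    rintro u v (⟨h, hb⟩ | ⟨h, hb⟩) (⟨h', hb'⟩ | ⟨h', hb'⟩) <;>
      first | omega | simp_all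

lemma TDecode_tournament (n : ℕ) (b : ∀ i : Fin n, Fin i → Bool) :
    IsTournament (TDecode n b) := by
  intro u v huv
  have : (u : ℕ) ≠ v := fun h => huv (Fin.ext h)
  rcases lt_or_gt_of_ne this with h | h
  · by_cases hb : b v ⟨u, h⟩ = true
    · exact Or.inr (Or.inl ⟨h, hb⟩)
    · exact Or.inl (Or.inr ⟨h, by simpa using hb⟩)
  · by_cases hb : b u ⟨v, h⟩ = true
    · exact Or.inl (Or.inl ⟨h, hb⟩)
    · exact Or.inr (Or.inr ⟨h, by simpa using hb⟩)

lemma TDecode_inj (n : ℕ) (b b' : ∀ i : Fin n, Fin i → Bool)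
    (h : ∀ u v, (TDecode n b).Adj u v ↔ (TDecode n b').Adj u v) : b = b' := by
  funext i j
  have hlt : (j : ℕ) < (i : ℕ) := j.2
  set v : Fin n := ⟨j, hlt.trans i.2⟩ with hv
  have h1 : (TDecode n b).Adj i v ↔ b i j = true := by
    constructor
    · rintro (⟨h', hb⟩ | ⟨h', hb⟩)
      · exact hb
      · simp [hv] at h'; omega
    · intro hb; exact Or.inl ⟨hlt, hb⟩
  have h2 : (TDecode n b').Adj i v ↔ b' i j = true := by
    constructor
    · rintro (⟨h', hb⟩ | ⟨h', hb⟩)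
      · exact hb
      · simp [hv] at h'; omega
    · intro hb; exact Or.inl ⟨hlt, hb⟩
  have := (h1.symm.trans (h i v)).trans h2
  by_cases hb : b i j = true <;> by_cases hb' : b' i j = true <;> simp_all

open Classical in
noncomputable def TEncode (n : ℕ) (S : OrientedGraph (Fin n)) : ∀ i : Fin n, Fin i → Bool :=
  fun i j => decide (S.Adj i ⟨j, j.2.trans i.2⟩)

lemma TEncode_hom (n : ℕ) (S : OrientedGraph (Fin n)) (hS : IsTournament S)
    (u v : Fin n) (h : S.Adj u v) : (TDecode n (TEncode n S)).Adj u v := by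
  classical
  have hne : (u : ℕ) ≠ v := by
    intro he; exact S.irrefl v (by rwa [show u = v from Fin.ext he] at h)
  rcases lt_or_gt_of_ne hne with hl | hl
  · refine Or.inr ⟨hl, ?_⟩
    have : ¬ S.Adj v u := S.asymm _ _ h
    simp only [TEncode, decide_eq_false_iff_not]
    convert this using 2
  · refine Or.inl ⟨hl, ?_⟩
    simp only [TEncode, decide_eq_true_eq]
    convert h using 2

-- existence of a universal tournament
noncomputable def BigT (n : ℕ) : OrientedGraph ((∀ i : Fin n, Fin i → Bool) × Fin n) where
  Adj p q := (p.1 = q.1 ∧ (TDecode n p.1).Adj p.2 q.2) ∨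
    ((Fintype.equivFin _) p.1 : ℕ) < ((Fintype.equivFin _) q.1 : ℕ)
  asymm := by
    rintro ⟨b, i⟩ ⟨b', j⟩ h h'
    dsimp only at h h'
    rcases h with ⟨he, h⟩ | h <;> rcases h' with ⟨he', h'⟩ | h'
    · subst he; exact (TDecode n b).asymm _ _ h h'
    · subst he; omega
    · subst he'; omega
    · omega

lemma BigT_tournament (n : ℕ) : IsTournament (BigT n) := by
  rintro ⟨b, i⟩ ⟨b', j⟩ hne
  by_cases hb : b = b'
  · subst hb
    have hij : i ≠ j := by intro h; exact hne (by rw [h])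
    rcases TDecode_tournament n b i j hij with h | h
    · exact Or.inl (Or.inl ⟨rfl, h⟩)
    · exact Or.inr (Or.inl ⟨rfl, h⟩)
  · have : ((Fintype.equivFin _) b : ℕ) ≠ ((Fintype.equivFin _) b' : ℕ) := by
      intro h
      exact hb ((Fintype.equivFin _).injective (Fin.ext h))
    rcases lt_or_gt_of_ne this with h | h
    · exact Or.inl (Or.inr h)
    · exact Or.inr (Or.inr h)

lemma exists_universal (n : ℕ) :
    ∃ N : ℕ, ∃ T : OrientedGraph (Fin N), IsUniversal n T := by
  classical
  set V := (∀ i : Fin n, Fin i → Bool) × Fin n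
  set e : V ≃ Fin (Fintype.card V) := Fintype.equivFin V with he
  refine ⟨Fintype.card V, ⟨fun x y => (BigT n).Adj (e.symm x) (e.symm y),
    fun x y h h' => (BigT n).asymm _ _ h h'⟩, ?_, ?_⟩
  · intro x y hxy
    exact BigT_tournament n (e.symm x) (e.symm y) (fun h => hxy (by
      simpa using congrArg e h))
  · intro S hS
    refine ⟨fun i => e (TEncode n S, i), ?_, ?_⟩
    · intro u v huv
      have := congrArg e.symm huv
      simp only [Equiv.symm_apply_apply] at this
      exact (Prod.ext_iff.mp this).2
    · intro u v h
      show (BigT n).Adj (e.symm (e _)) (e.symm (e _))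
      simp only [Equiv.symm_apply_apply]
      exact Or.inl ⟨rfl, TEncode_hom n S hS u v h⟩

lemma count_lemma (n N : ℕ) (T : OrientedGraph (Fin N)) (hT : IsUniversal n T) :
    2 ^ (∑ i : Fin n, (i : ℕ)) ≤ N ^ n := by
  classical
  -- choose an embedding for each code
  have hch : ∀ b : ∀ i : Fin n, Fin i → Bool, ∃ f : Fin n → Fin N,
      Function.Injective f ∧ ∀ u v, (TDecode n b).Adj u v → T.Adj (f u) (f v) :=
    fun b => hT.2 (TDecode n b) (TDecode_tournament n b)
  choose Φ hΦinj hΦhom using hch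
  have hinj : Function.Injective Φ := by
    intro b b' hbb'
    refine TDecode_inj n b b' (fun u v => ?_)
    have key : ∀ c : ∀ i : Fin n, Fin i → Bool, ∀ u v : Fin n,
        (TDecode n c).Adj u v ↔ T.Adj (Φ c u) (Φ c v) := by
      intro c u v
      refine ⟨hΦhom c u v, fun h => ?_⟩
      have huv : u ≠ v := by
        rintro rfl; exact T.irrefl _ h
      rcases TDecode_tournament n c u v huv with h' | h'
      · exact h'
      · exact absurd h (T.asymm _ _ (hΦhom c v u h'))
    rw [key b u v, key b' u v, hbb']
  have hcard := Fintype.card_le_of_injective Φ hinj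
  have h1 : Fintype.card (∀ i : Fin n, Fin i → Bool) = 2 ^ (∑ i : Fin n, (i : ℕ)) := by
    rw [Fintype.card_pi]
    simp [Fintype.card_fun]
    rw [Finset.prod_pow_eq_pow_sum]
  have h2 : Fintype.card (Fin n → Fin N) = N ^ n := by
    simp [Fintype.card_fun]
  rwa [h1, h2] at hcard

/-- the minimum order of an n-universal tournament is at least 2^((n-1)/2). -/
theorem universal_tournament_lower_bound (n : ℕ) (hn : 1 ≤ n) :
    (2 : ℝ) ^ (((n : ℝ) - 1) / 2) ≤
      ((sInf {N : ℕ | ∃ T : OrientedGraph (Fin N), IsUniversal n T} : ℕ) : ℝ) := by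
  have hne : {N : ℕ | ∃ T : OrientedGraph (Fin N), IsUniversal n T}.Nonempty := by
    obtain ⟨N, T, hT⟩ := exists_universal n
    exact ⟨N, T, hT⟩
  set N₀ := sInf {N : ℕ | ∃ T : OrientedGraph (Fin N), IsUniversal n T} with hN₀
  obtain ⟨T, hT⟩ := Nat.sInf_mem hne
  set k := ∑ i : Fin n, (i : ℕ) with hk
  have hcount : 2 ^ k ≤ N₀ ^ n := count_lemma n N₀ T hT
  have hgauss : 2 * k = n * (n - 1) := by
    rw [hk, Fin.sum_univ_eq_sum_range (fun i => i) n]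
    have := Finset.sum_range_id_mul_two n
    omega
  have hkr : (k : ℝ) = (n : ℝ) * ((n : ℝ) - 1) / 2 := by
    have h2k : (2 : ℝ) * k = (n : ℝ) * ((n : ℝ) - 1) := by
      have := congrArg (fun m : ℕ => (m : ℝ)) hgauss
      push_cast [Nat.cast_sub hn] at this
      linarith
    linarith
  have hpow : ((2 : ℝ) ^ (((n : ℝ) - 1) / 2)) ^ n ≤ ((N₀ : ℝ)) ^ n := by
    have e1 : ((2 : ℝ) ^ (((n : ℝ) - 1) / 2)) ^ n = (2 : ℝ) ^ ((k : ℝ)) := by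
      rw [← Real.rpow_natCast ((2 : ℝ) ^ (((n : ℝ) - 1) / 2)) n,
        ← Real.rpow_mul (by norm_num)]
      congr 1
      rw [hkr]; ring
    rw [e1, Real.rpow_natCast]
    calc ((2 : ℝ)) ^ k = ((2 ^ k : ℕ) : ℝ) := by push_cast; ring
      _ ≤ ((N₀ ^ n : ℕ) : ℝ) := by exact_mod_cast hcount
      _ = (N₀ : ℝ) ^ n := by push_cast; ring
  exact le_of_pow_le_pow_left₀ (by omega) (Nat.cast_nonneg _) hpow
end

section
/- For every undirected graph G, if the square G^2 of G admits a proper k-coloring, then the upper oriented chromatic number of G is at most 2^k - 1. -/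
private def TT : ℕ → Type
  | 0 => Empty
  | (k+1) => Option (TT k × Bool)

private def UU : (k : ℕ) → OrientedGraph (TT k)
  | 0 => ⟨fun _ _ => False, fun _ _ h => h.elim⟩
  | (k+1) =>
    { Adj := fun p q =>
        match p, q with
        | none, none => False
        | none, some (_, b) => b = true
        | some (_, b), none => b = false
        | some (x, _), some (y, _) => (UU k).Adj x y
      asymm := by
        rintro (_ | ⟨x, bx⟩) (_ | ⟨y, by'⟩) h h'
        · exact h
        · simp_all
        · simp_all
        · exact (UU k).asymm x y h h' }

private def equivTT : ∀ k, TT k ≃ Fin (2 ^ k - 1)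
  | 0 => (Equiv.equivOfIsEmpty Empty (Fin 0)).trans (finCongr (by norm_num))
  | (k+1) =>
    (Equiv.optionCongr (((equivTT k).prodCongr finTwoEquiv.symm).trans finProdFinEquiv)).trans
      ((finSuccEquiv _).symm.trans (finCongr (by
        have h1 : 0 < 2 ^ k := pow_pos (by norm_num) k
        rw [pow_succ]; omega)))

private lemma key : ∀ (k : ℕ) {V : Type*} (D : OrientedGraph V) (c : V → Fin k),
    (∀ u v, D.Adj u v → c u ≠ c v) →
    (∀ u w v, u ≠ w → (D.Adj u v ∨ D.Adj v u) → (D.Adj w v ∨ D.Adj v w) → c u ≠ c w) →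
    ∃ f : V → TT k, D.IsHom (UU k) f
  | 0, V, D, c, _, _ => ⟨fun v => (c v).elim0, fun u _ _ => (c u).elim0⟩
  | (k+1), V, D, c, h1, h2 => by
    classical
    set V' := {v : V // c v ≠ Fin.last k} with hV'
    let D' : OrientedGraph V' := ⟨fun a b => D.Adj a.1 b.1, fun a b h h' => D.asymm _ _ h h'⟩
    let c' : V' → Fin k := fun v => (c v.1).castPred v.2
    have hval : ∀ a : V', ((c' a) : ℕ) = ((c a.1) : ℕ) := fun a => by
      simp [c', Fin.coe_castPred]
    have hinj : ∀ a b : V', c a.1 ≠ c b.1 → c' a ≠ c' b := by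
      intro a b hne he
      exact hne (Fin.ext (by rw [← hval a, ← hval b, he]))
    obtain ⟨f', hf'⟩ := key k D' c'
      (fun u v h => hinj u v (h1 u.1 v.1 h))
      (fun u w v hne hu hw => hinj u w (h2 u.1 w.1 v.1 (fun e => hne (Subtype.ext e)) hu hw))
    let b : V → Bool := fun v => if (∃ u, c u = Fin.last k ∧ D.Adj u v) then true else false
    refine ⟨fun v => if h : c v = Fin.last k then (none : Option (TT k × Bool))
      else some (f' ⟨v, h⟩, b v), ?_⟩
    intro u v huv
    by_cases hu : c u = Fin.last k <;> by_cases hv : c v = Fin.last k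
    · exact absurd (hv.trans hu.symm) (h1 u v huv).symm
    · change (UU (k+1)).Adj (dite (α := Option (TT k × Bool)) (c u = Fin.last k) (fun _ => (none : Option (TT k × Bool))) (fun h => some (f' ⟨u, h⟩, b u))) (dite (α := Option (TT k × Bool)) (c v = Fin.last k) (fun _ => (none : Option (TT k × Bool))) (fun h => some (f' ⟨v, h⟩, b v)))
      rw [dif_pos hu, dif_neg hv]
      show b v = true
      simp only [b, if_pos (⟨u, hu, huv⟩ : ∃ w, c w = Fin.last k ∧ D.Adj w v)]
    · change (UU (k+1)).Adj (dite (α := Option (TT k × Bool)) (c u = Fin.last k) (fun _ => (none : Option (TT k × Bool))) (fun h => some (f' ⟨u, h⟩, b u))) (dite (α := Option (TT k × Bool)) (c v = Fin.last k) (fun _ => (none : Option (TT k × Bool))) (fun h => some (f' ⟨v, h⟩, b v)))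
      rw [dif_neg hu, dif_pos hv]
      show b u = false
      simp only [b, ite_eq_right_iff]
      rintro ⟨w, hw, hwu⟩
      by_cases hwv : w = v
      · exact (D.asymm u v huv (hwv ▸ hwu)).elim
      · exact (h2 w v u hwv (Or.inl hwu) (Or.inr huv) (hw.trans hv.symm)).elim
    · change (UU (k+1)).Adj (dite (α := Option (TT k × Bool)) (c u = Fin.last k) (fun _ => (none : Option (TT k × Bool))) (fun h => some (f' ⟨u, h⟩, b u))) (dite (α := Option (TT k × Bool)) (c v = Fin.last k) (fun _ => (none : Option (TT k × Bool))) (fun h => some (f' ⟨v, h⟩, b v)))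
      rw [dif_neg hu, dif_neg hv]
      exact hf' ⟨u, hu⟩ ⟨v, hv⟩ huv

/-- if G² is k-colorable then χ_o⁺(G) ≤ 2^k - 1. -/
theorem upperOchrom_le_of_square_colorable {V : Type*} (G : SimpleGraph V) (k : ℕ)
    (hc : (square G).Colorable k) :
    upperOchrom G ≤ 2 ^ k - 1 := by
  classical
  obtain ⟨C⟩ := hc
  apply Nat.sInf_le
  refine ⟨⟨fun i j => (UU k).Adj ((equivTT k).symm i) ((equivTT k).symm j),
    fun i j h h' => (UU k).asymm _ _ h h'⟩, ?_⟩
  intro o ho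
  have h1 : ∀ u v, o.Adj u v → C u ≠ C v := by
    intro u v h
    have hG : G.Adj u v := (ho u v).mp (Or.inl h)
    exact C.valid ⟨hG.ne, Or.inl hG⟩
  have h2 : ∀ u w v, u ≠ w → (o.Adj u v ∨ o.Adj v u) → (o.Adj w v ∨ o.Adj v w) →
      C u ≠ C w := by
    intro u w v hne hu hw
    have hGu : G.Adj u v := (ho u v).mp hu
    have hGw : G.Adj w v := (ho w v).mp hw
    exact C.valid ⟨hne, Or.inr ⟨v, hGu, hGw.symm⟩⟩
  obtain ⟨f, hf⟩ := key k o (fun v => C v) h1 h2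
  exact ⟨fun v => equivTT k (f v), fun u v h => by
    simpa using hf u v h⟩
end

section
/- For all k, ℓ ≥ 3, the oriented chromatic number of the lexicographic product of the directed path on k vertices with the directed path on ℓ vertices equals 9. -/
/-- The 9-vertex tournament (lex square of directed triangle) as a graph on `Fin 9`. -/
def T9 : OrientedGraph (Fin 9) where
  Adj m n := ((n : ℕ)/3 = ((m : ℕ)/3 + 1) % 3) ∨
    ((n : ℕ)/3 = (m : ℕ)/3 ∧ (n : ℕ)%3 = ((m : ℕ)%3 + 1)%3)
  asymm := by decide

instance : DecidableRel (olex (dirPath 3) (dirPath 3)).Adj := fun p q =>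
  inferInstanceAs (Decidable ((p.1 : ℕ) + 1 = (q.1 : ℕ) ∨
    (p.1 = q.1 ∧ (p.2 : ℕ) + 1 = (q.2 : ℕ))))

lemma dp3_pairs : ∀ p q : Fin 3 × Fin 3, p ≠ q →
    (olex (dirPath 3) (dirPath 3)).Adj p q ∨ (olex (dirPath 3) (dirPath 3)).Adj q p ∨
    ∃ w, ((olex (dirPath 3) (dirPath 3)).Adj p w ∧ (olex (dirPath 3) (dirPath 3)).Adj w q) ∨
      ((olex (dirPath 3) (dirPath 3)).Adj q w ∧ (olex (dirPath 3) (dirPath 3)).Adj w p) := by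
  decide

/-- χ_o(DP_k[DP_ℓ]) = 9 for k, ℓ ≥ 3. -/
theorem ochrom_olex_dirPath (k l : ℕ) (hk : 3 ≤ k) (hl : 3 ≤ l) :
    (olex (dirPath k) (dirPath l)).ochrom = 9 := by
  have h9 : 9 ∈ {n | ∃ T : OrientedGraph (Fin n), ∃ f : Fin k × Fin l → Fin n,
      (olex (dirPath k) (dirPath l)).IsHom T f} := by
    refine ⟨T9, fun p => ⟨((p.1 : ℕ) % 3) * 3 + (p.2 : ℕ) % 3, by omega⟩, ?_⟩
    rintro ⟨i, j⟩ ⟨i', j'⟩ (h | ⟨he, h⟩)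
    · simp only [dirPath] at h
      left
      simp only [T9]
      omega
    · have hv : (i : ℕ) = (i' : ℕ) := congrArg Fin.val he
      simp only [dirPath] at h
      right
      simp only [T9]
      omega
  have hlow : ∀ n ∈ {n | ∃ T : OrientedGraph (Fin n), ∃ f : Fin k × Fin l → Fin n,
      (olex (dirPath k) (dirPath l)).IsHom T f}, 9 ≤ n := by
    rintro n ⟨T, f, hf⟩
    set emb : Fin 3 × Fin 3 → Fin k × Fin l := fun p =>
      (⟨(p.1 : ℕ), by omega⟩, ⟨(p.2 : ℕ), by omega⟩) with hemb
    have hembhom : (olex (dirPath 3) (dirPath 3)).IsHom (olex (dirPath k) (dirPath l)) emb := by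
      rintro ⟨a, b⟩ ⟨a', b'⟩ (h | ⟨he, h⟩)
      · exact Or.inl h
      · have : (a : ℕ) = (a' : ℕ) := congrArg Fin.val he
        exact Or.inr ⟨Fin.ext this, h⟩
    have hg : Function.Injective (fun p => f (emb p)) := by
      intro p q hpq
      have hpq' : f (emb p) = f (emb q) := hpq
      by_contra hne
      rcases dp3_pairs p q hne with h | h | ⟨w, ⟨h1, h2⟩ | ⟨h1, h2⟩⟩
      · have := hf _ _ (hembhom _ _ h); rw [hpq'] at this; exact T.irrefl _ this
      · have := hf _ _ (hembhom _ _ h); rw [hpq'] at this; exact T.irrefl _ this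
      · have a1 := hf _ _ (hembhom _ _ h1)
        have a2 := hf _ _ (hembhom _ _ h2)
        rw [← hpq'] at a2
        exact T.asymm _ _ a1 a2
      · have a1 := hf _ _ (hembhom _ _ h1)
        have a2 := hf _ _ (hembhom _ _ h2)
        rw [hpq'] at a2
        exact T.asymm _ _ a1 a2
    have := Fintype.card_le_of_injective _ hg
    simpa using this
  unfold OrientedGraph.ochrom
  exact le_antisymm (Nat.sInf_le h9) (le_csInf ⟨9, h9⟩ hlow)
end

section
/- For all k, ℓ ≥ 1 and all orientations P⃗_k of the path on k vertices and P⃗_ℓ of the path on ℓ vertices, the oriented chromatic number of the Cartesian product P⃗_k □ P⃗_ℓ is at most 3; indeed P⃗_k □ P⃗_ℓ admits a homomorphism to the directed 3-cycle. -/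
lemma path_orient_hom {k : ℕ} (P : OrientedGraph (Fin k))
    (hP : IsOrientation (SimpleGraph.pathGraph k) P) :
    ∃ g : Fin k → ZMod 3, ∀ i j, P.Adj i j → g j = g i + 1 := by
  classical
  let g : ℕ → ZMod 3 := fun n => Nat.rec (0 : ZMod 3)
    (fun i gi => if h : i + 1 < k then
      (if P.Adj ⟨i, Nat.lt_of_succ_lt h⟩ ⟨i + 1, h⟩ then gi + 1 else gi - 1) else 0) n
  refine ⟨fun i => g i.val, ?_⟩
  intro i j hadj
  have hpg := (hP i j).mp (Or.inl hadj)
  rw [SimpleGraph.pathGraph_adj] at hpg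
  rcases hpg with h | h
  · have h1 : (i : ℕ) + 1 < k := h ▸ j.isLt
    have hij : (⟨(i : ℕ), Nat.lt_of_succ_lt h1⟩ : Fin k) = i := rfl
    have hjj : (⟨(i : ℕ) + 1, h1⟩ : Fin k) = j := Fin.ext h
    have hg : g ((i : ℕ) + 1) = g i + 1 := by
      show (if h : (i : ℕ) + 1 < k then
        (if P.Adj ⟨(i : ℕ), Nat.lt_of_succ_lt h⟩ ⟨(i : ℕ) + 1, h⟩ then g i + 1 else g i - 1)
        else 0) = g i + 1
      rw [dif_pos h1, if_pos (by rw [hij, hjj]; exact hadj)]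
    calc g (j : ℕ) = g ((i : ℕ) + 1) := by rw [h]
      _ = g i + 1 := hg
  · have h1 : (j : ℕ) + 1 < k := h ▸ i.isLt
    have hjj : (⟨(j : ℕ), Nat.lt_of_succ_lt h1⟩ : Fin k) = j := rfl
    have hii : (⟨(j : ℕ) + 1, h1⟩ : Fin k) = i := Fin.ext h
    have hg : g ((j : ℕ) + 1) = g j - 1 := by
      show (if h : (j : ℕ) + 1 < k then
        (if P.Adj ⟨(j : ℕ), Nat.lt_of_succ_lt h⟩ ⟨(j : ℕ) + 1, h⟩ then g j + 1 else g j - 1)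
        else 0) = g j - 1
      rw [dif_pos h1, if_neg (by rw [hjj, hii]; exact P.asymm _ _ hadj)]
    have hgi : g (i : ℕ) = g (j : ℕ) - 1 := by rw [← h]; exact hg
    show g (j : ℕ) = g (i : ℕ) + 1
    rw [hgi]; ring

/-- for any orientations of two paths, their Cartesian product maps
homomorphically to the directed 3-cycle, and its oriented chromatic number is at most 3. -/
theorem ocart_paths_to_C3 (k l : ℕ) (hk : 1 ≤ k) (hl : 1 ≤ l)
    (P : OrientedGraph (Fin k)) (Q : OrientedGraph (Fin l))
    (hP : IsOrientation (SimpleGraph.pathGraph k) P)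
    (hQ : IsOrientation (SimpleGraph.pathGraph l) Q) :
    (∃ f : Fin k × Fin l → ZMod 3, (ocart P Q).IsHom dirC3 f) ∧
    (ocart P Q).ochrom ≤ 3 := by

  obtain ⟨g, hg⟩ := path_orient_hom P hP
  obtain ⟨h, hh⟩ := path_orient_hom Q hQ
  have hf : (ocart P Q).IsHom dirC3 (fun p => g p.1 + h p.2) := by
    rintro ⟨a, b⟩ ⟨a', b'⟩ (⟨e, hq⟩ | ⟨e, hp⟩)
    · dsimp only at e hq
      show g a' + h b' = g a + h b + 1
      rw [← e, hh _ _ hq]; ring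
    · dsimp only at e hp
      show g a' + h b' = g a + h b + 1
      rw [← e, hg _ _ hp]; ring
  refine ⟨⟨_, hf⟩, ?_⟩
  have hmem : 3 ∈ {n | ∃ T : OrientedGraph (Fin n), ∃ f : Fin k × Fin l → Fin n,
      (ocart P Q).IsHom T f} :=
    ⟨dirC3, fun p => g p.1 + h p.2, hf⟩
  exact Nat.sInf_le hmem
end

section
/- For all undirected graphs G and H, with k = min(χ(G), χ(H)), the upper oriented chromatic number of the Cartesian product G □ H is at most k·χ_o^+(G)·χ_o^+(H). -/
namespace UpperBoxAux

open OrientedGraph SimpleGraph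

/-- Transport an oriented graph along an equivalence. -/
def omapE {A B : Type*} (e : A ≃ B) (T : OrientedGraph A) : OrientedGraph B where
  Adj x y := T.Adj (e.symm x) (e.symm y)
  asymm _ _ h h' := T.asymm _ _ h h'

def fibG {V W : Type*} (O : OrientedGraph (V × W)) (w : W) : OrientedGraph V where
  Adj u v := O.Adj (u, w) (v, w)
  asymm _ _ h h' := O.asymm _ _ h h'

def fibH {V W : Type*} (O : OrientedGraph (V × W)) (v : V) : OrientedGraph W where
  Adj x y := O.Adj (v, x) (v, y)
  asymm _ _ h h' := O.asymm _ _ h h'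

lemma fibG_orient {V W : Type*} {G : SimpleGraph V} {H : SimpleGraph W}
    {O : OrientedGraph (V × W)} (hO : IsOrientation (G.boxProd H) O) (w : W) :
    IsOrientation G (fibG O w) := by
  intro u v
  constructor
  · intro h
    have := (hO (u, w) (v, w)).1 h
    rw [SimpleGraph.boxProd_adj] at this
    rcases this with ⟨h, -⟩ | ⟨h, -⟩
    · exact h
    · exact absurd h (H.irrefl)
  · intro h
    exact (hO (u, w) (v, w)).2 (SimpleGraph.boxProd_adj.mpr (Or.inl ⟨h, rfl⟩))

lemma fibH_orient {V W : Type*} {G : SimpleGraph V} {H : SimpleGraph W}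
    {O : OrientedGraph (V × W)} (hO : IsOrientation (G.boxProd H) O) (v : V) :
    IsOrientation H (fibH O v) := by
  intro x y
  constructor
  · intro h
    have := (hO (v, x) (v, y)).1 h
    rw [SimpleGraph.boxProd_adj] at this
    rcases this with ⟨h, -⟩ | ⟨h, -⟩
    · exact absurd h (G.irrefl)
    · exact h
  · intro h
    exact (hO (v, x) (v, y)).2 (SimpleGraph.boxProd_adj.mpr (Or.inr ⟨h, rfl⟩))

lemma wor_asymm {α : Type*} {a b : α} (h : WellOrderingRel a b) (h' : WellOrderingRel b a) :
    False :=
  (WellOrderingRel.isWellOrder.toIsWellFounded.wf.asymmetric _ _ h) h'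

/-- Extend an orientation of `G` to one of `G □ H`, orienting `H`-fibers by a well-order. -/
def ext1 {V W : Type*} (H : SimpleGraph W) (o : OrientedGraph V) : OrientedGraph (V × W) where
  Adj p q := (p.2 = q.2 ∧ o.Adj p.1 q.1) ∨ (p.1 = q.1 ∧ H.Adj p.2 q.2 ∧ WellOrderingRel p.2 q.2)
  asymm := by
    rintro ⟨u, x⟩ ⟨v, y⟩ (⟨e, h⟩ | ⟨e, hH, hr⟩) (⟨e', h'⟩ | ⟨e', hH', hr'⟩)
    · exact o.asymm _ _ h h'
    · dsimp at *; subst e; exact H.irrefl hH'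
    · dsimp at *; subst e'; exact H.irrefl hH
    · exact wor_asymm hr hr'

lemma ext1_orient {V W : Type*} (G : SimpleGraph V) (H : SimpleGraph W)
    {o : OrientedGraph V} (ho : IsOrientation G o) :
    IsOrientation (G.boxProd H) (ext1 H o) := by
  rintro ⟨u, x⟩ ⟨v, y⟩
  rw [SimpleGraph.boxProd_adj]
  constructor
  · rintro ((⟨e, h⟩ | ⟨e, hH, -⟩) | (⟨e, h⟩ | ⟨e, hH, -⟩))
    · exact Or.inl ⟨(ho u v).1 (Or.inl h), e⟩
    · exact Or.inr ⟨hH, e⟩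
    · exact Or.inl ⟨(ho u v).1 (Or.inr h), e.symm⟩
    · exact Or.inr ⟨hH.symm, e.symm⟩
  · rintro (⟨h, e⟩ | ⟨h, e⟩)
    · rcases (ho u v).2 h with h' | h'
      · exact Or.inl (Or.inl ⟨e, h'⟩)
      · exact Or.inr (Or.inl ⟨e.symm, h'⟩)
    · rcases trichotomous_of WellOrderingRel x y with hr | he | hr
      · exact Or.inl (Or.inr ⟨e, h, hr⟩)
      · exact absurd (he ▸ h) (H.irrefl)
      · exact Or.inr (Or.inr ⟨e.symm, h.symm, hr⟩)

/-- Extend an orientation of `H` to one of `G □ H`. -/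
def ext2 {V W : Type*} (G : SimpleGraph V) (o : OrientedGraph W) : OrientedGraph (V × W) where
  Adj p q := (p.1 = q.1 ∧ o.Adj p.2 q.2) ∨ (p.2 = q.2 ∧ G.Adj p.1 q.1 ∧ WellOrderingRel p.1 q.1)
  asymm := by
    rintro ⟨u, x⟩ ⟨v, y⟩ (⟨e, h⟩ | ⟨e, hG, hr⟩) (⟨e', h'⟩ | ⟨e', hG', hr'⟩)
    · exact o.asymm _ _ h h'
    · dsimp at *; subst e; exact G.irrefl hG'
    · dsimp at *; subst e'; exact G.irrefl hG
    · exact wor_asymm hr hr'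

lemma ext2_orient {V W : Type*} (G : SimpleGraph V) (H : SimpleGraph W)
    {o : OrientedGraph W} (ho : IsOrientation H o) :
    IsOrientation (G.boxProd H) (ext2 G o) := by
  rintro ⟨u, x⟩ ⟨v, y⟩
  rw [SimpleGraph.boxProd_adj]
  constructor
  · rintro ((⟨e, h⟩ | ⟨e, hG, -⟩) | (⟨e, h⟩ | ⟨e, hG, -⟩))
    · exact Or.inr ⟨(ho x y).1 (Or.inl h), e⟩
    · exact Or.inl ⟨hG, e⟩
    · exact Or.inr ⟨(ho x y).1 (Or.inr h), e.symm⟩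
    · exact Or.inl ⟨hG.symm, e.symm⟩
  · rintro (⟨h, e⟩ | ⟨h, e⟩)
    · rcases trichotomous_of WellOrderingRel u v with hr | he | hr
      · exact Or.inl (Or.inr ⟨e, h, hr⟩)
      · exact absurd (he ▸ h) (G.irrefl)
      · exact Or.inr (Or.inr ⟨e.symm, h.symm, hr⟩)
    · rcases (ho x y).2 h with h' | h'
      · exact Or.inl (Or.inl ⟨e, h'⟩)
      · exact Or.inr (Or.inl ⟨e.symm, h'⟩)

lemma memG_of_memBox {V W : Type*} [Nonempty W] (G : SimpleGraph V) (H : SimpleGraph W) {n : ℕ}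
    (h : ∃ U : OrientedGraph (Fin n), ∀ o : OrientedGraph (V × W),
      IsOrientation (G.boxProd H) o → ∃ f : V × W → Fin n, o.IsHom U f) :
    ∃ U : OrientedGraph (Fin n), ∀ o : OrientedGraph V,
      IsOrientation G o → ∃ f : V → Fin n, o.IsHom U f := by
  obtain ⟨U, hU⟩ := h
  refine ⟨U, fun o ho => ?_⟩
  obtain ⟨f, hf⟩ := hU (ext1 H o) (ext1_orient G H ho)
  have w0 : W := Classical.arbitrary W
  exact ⟨fun v => f (v, w0), fun u v h => hf (u, w0) (v, w0) (Or.inl ⟨rfl, h⟩)⟩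

lemma memH_of_memBox {V W : Type*} [Nonempty V] (G : SimpleGraph V) (H : SimpleGraph W) {n : ℕ}
    (h : ∃ U : OrientedGraph (Fin n), ∀ o : OrientedGraph (V × W),
      IsOrientation (G.boxProd H) o → ∃ f : V × W → Fin n, o.IsHom U f) :
    ∃ U : OrientedGraph (Fin n), ∀ o : OrientedGraph W,
      IsOrientation H o → ∃ f : W → Fin n, o.IsHom U f := by
  obtain ⟨U, hU⟩ := h
  refine ⟨U, fun o ho => ?_⟩
  obtain ⟨f, hf⟩ := hU (ext2 G o) (ext2_orient G H ho)
  have v0 : V := Classical.arbitrary V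
  exact ⟨fun w => f (v0, w), fun x y h => hf (v0, x) (v0, y) (Or.inl ⟨rfl, h⟩)⟩

def prodEquiv (k a b : ℕ) : Fin k × Fin a × Fin b ≃ Fin (k * a * b) :=
  ((Equiv.refl (Fin k)).prodCongr finProdFinEquiv).trans
    ((finProdFinEquiv).trans (finCongr (by ring)))

lemma key1 {V W : Type*} (G : SimpleGraph V) (H : SimpleGraph W) {k a b : ℕ}
    (C : G.Coloring (Fin k))
    (hA : ∃ U : OrientedGraph (Fin a), ∀ o : OrientedGraph V,
      IsOrientation G o → ∃ f : V → Fin a, o.IsHom U f)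
    (hB : ∃ U : OrientedGraph (Fin b), ∀ o : OrientedGraph W,
      IsOrientation H o → ∃ f : W → Fin b, o.IsHom U f) :
    ∃ U : OrientedGraph (Fin (k * a * b)), ∀ o : OrientedGraph (V × W),
      IsOrientation (G.boxProd H) o → ∃ f : V × W → Fin (k * a * b), o.IsHom U f := by
  obtain ⟨UG, hUG⟩ := hA
  obtain ⟨UH, hUH⟩ := hB
  set e := prodEquiv k a b with he
  let T : OrientedGraph (Fin k × Fin a × Fin b) :=
    { Adj := fun p q => (p.1 ≠ q.1 ∧ UG.Adj p.2.1 q.2.1) ∨ (p.1 = q.1 ∧ UH.Adj p.2.2 q.2.2)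
      asymm := by
        rintro p q (⟨hne, h⟩ | ⟨heq, h⟩) (⟨hne', h'⟩ | ⟨heq', h'⟩)
        · exact UG.asymm _ _ h h'
        · exact hne heq'.symm
        · exact hne' heq.symm
        · exact UH.asymm _ _ h h' }
  refine ⟨omapE e T, fun O hO => ?_⟩
  choose fG hfG using fun w => hUG (fibG O w) (fibG_orient hO w)
  choose fH hfH using fun v => hUH (fibH O v) (fibH_orient hO v)
  refine ⟨fun p => e (C p.1, fG p.2 p.1, fH p.1 p.2), ?_⟩
  rintro ⟨v, w⟩ ⟨v', w'⟩ h
  have hbox := (hO _ _).1 (Or.inl h)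
  rw [SimpleGraph.boxProd_adj] at hbox
  show T.Adj (e.symm (e _)) (e.symm (e _))
  rw [Equiv.symm_apply_apply, Equiv.symm_apply_apply]
  rcases hbox with ⟨hg, heq⟩ | ⟨hh, heq⟩
  · dsimp at heq; subst heq
    exact Or.inl ⟨C.valid hg, hfG w _ _ h⟩
  · dsimp at heq; subst heq
    exact Or.inr ⟨rfl, hfH v _ _ h⟩

lemma key2 {V W : Type*} (G : SimpleGraph V) (H : SimpleGraph W) {k a b : ℕ}
    (C : H.Coloring (Fin k))
    (hA : ∃ U : OrientedGraph (Fin a), ∀ o : OrientedGraph V,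
      IsOrientation G o → ∃ f : V → Fin a, o.IsHom U f)
    (hB : ∃ U : OrientedGraph (Fin b), ∀ o : OrientedGraph W,
      IsOrientation H o → ∃ f : W → Fin b, o.IsHom U f) :
    ∃ U : OrientedGraph (Fin (k * a * b)), ∀ o : OrientedGraph (V × W),
      IsOrientation (G.boxProd H) o → ∃ f : V × W → Fin (k * a * b), o.IsHom U f := by
  obtain ⟨UG, hUG⟩ := hA
  obtain ⟨UH, hUH⟩ := hB
  set e := prodEquiv k a b with he
  let T : OrientedGraph (Fin k × Fin a × Fin b) :=
    { Adj := fun p q => (p.1 = q.1 ∧ UG.Adj p.2.1 q.2.1) ∨ (p.1 ≠ q.1 ∧ UH.Adj p.2.2 q.2.2)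
      asymm := by
        rintro p q (⟨heq, h⟩ | ⟨hne, h⟩) (⟨heq', h'⟩ | ⟨hne', h'⟩)
        · exact UG.asymm _ _ h h'
        · exact hne' heq.symm
        · exact hne heq'.symm
        · exact UH.asymm _ _ h h' }
  refine ⟨omapE e T, fun O hO => ?_⟩
  choose fG hfG using fun w => hUG (fibG O w) (fibG_orient hO w)
  choose fH hfH using fun v => hUH (fibH O v) (fibH_orient hO v)
  refine ⟨fun p => e (C p.2, fG p.2 p.1, fH p.1 p.2), ?_⟩
  rintro ⟨v, w⟩ ⟨v', w'⟩ h
  have hbox := (hO _ _).1 (Or.inl h)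
  rw [SimpleGraph.boxProd_adj] at hbox
  show T.Adj (e.symm (e _)) (e.symm (e _))
  rw [Equiv.symm_apply_apply, Equiv.symm_apply_apply]
  rcases hbox with ⟨hg, heq⟩ | ⟨hh, heq⟩
  · dsimp at heq; subst heq
    exact Or.inl ⟨rfl, hfG w _ _ h⟩
  · dsimp at heq; subst heq
    exact Or.inr ⟨C.valid hh, hfH v _ _ h⟩

end UpperBoxAux

/-- χ_o⁺(G □ H) ≤ min(χ(G), χ(H))·χ_o⁺(G)·χ_o⁺(H). -/
theorem upperOchrom_boxProd {V W : Type*} (G : SimpleGraph V) (H : SimpleGraph W)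
    (cG cH : ℕ) (hG : G.chromaticNumber = cG) (hH : H.chromaticNumber = cH) :
    upperOchrom (G.boxProd H) ≤ min cG cH * upperOchrom G * upperOchrom H :=
  by
  classical
  rcases isEmpty_or_nonempty (V × W) with hE | hNE
  · have h0 : (0 : ℕ) ∈ {n | ∃ U : OrientedGraph (Fin n), ∀ o : OrientedGraph (V × W),
        IsOrientation (G.boxProd H) o → ∃ f : V × W → Fin n, o.IsHom U f} :=
      ⟨⟨fun _ _ => False, by simp⟩, fun o _ =>
        ⟨fun p => isEmptyElim p, fun u => isEmptyElim u⟩⟩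
    exact le_trans (Nat.sInf_le h0) (Nat.zero_le _)
  · have hV : Nonempty V := ⟨(Classical.arbitrary (V × W)).1⟩
    have hW : Nonempty W := ⟨(Classical.arbitrary (V × W)).2⟩
    set SG := {n | ∃ U : OrientedGraph (Fin n), ∀ o : OrientedGraph V,
        IsOrientation G o → ∃ f : V → Fin n, o.IsHom U f} with hSGdef
    set SH := {n | ∃ U : OrientedGraph (Fin n), ∀ o : OrientedGraph W,
        IsOrientation H o → ∃ f : W → Fin n, o.IsHom U f} with hSHdef
    by_cases hSG : SG.Nonempty
    · by_cases hSH : SH.Nonempty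
      · have haG : upperOchrom G ∈ SG := Nat.sInf_mem hSG
        have haH : upperOchrom H ∈ SH := Nat.sInf_mem hSH
        have hcolG : G.Colorable cG := by
          rw [← SimpleGraph.chromaticNumber_le_iff_colorable, hG]
        have hcolH : H.Colorable cH := by
          rw [← SimpleGraph.chromaticNumber_le_iff_colorable, hH]
        rcases le_total cG cH with hle | hle
        · rw [min_eq_left hle]
          exact Nat.sInf_le (UpperBoxAux.key1 G H hcolG.some haG haH)
        · rw [min_eq_right hle]
          exact Nat.sInf_le (UpperBoxAux.key2 G H hcolH.some haG haH)
      · have : upperOchrom (G.boxProd H) = 0 := by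
          rw [upperOchrom, Nat.sInf_eq_zero]
          right
          ext n
          simp only [Set.mem_setOf_eq, Set.mem_empty_iff_false, iff_false]
          intro hn
          exact hSH ⟨n, UpperBoxAux.memH_of_memBox G H hn⟩
        simp [this]
    · have : upperOchrom (G.boxProd H) = 0 := by
        rw [upperOchrom, Nat.sInf_eq_zero]
        right
        ext n
        simp only [Set.mem_setOf_eq, Set.mem_empty_iff_false, iff_false]
        intro hn
        exact hSG ⟨n, UpperBoxAux.memG_of_memBox G H hn⟩
      simp [this]
end
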